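/- Let r : R → ℤ be a non-archimedean function on a root system, k₀(α) = (r_m(α) − r(α))/2 ∈ (1/2)ℤ, and k₁ = ⌈k₀⌉ (pointwise ceiling, an integer-valued function). Then k₁ also satisfies: (1) k₁(α) + k₁(−α) ≥ r_m(α) − r(α) for all α ∈ R, and (2) k₁(α) + k₁(β) − k₁(α+β) ≥ r(α+β) − min{r(α), r(β)} whenever α, β, α+β ∈ R. -/

import Mathlib

/-!
A root `δ` that is not strongly orthogonal to `α + β` is not strongly orthogonal to `α` or to
`β`: otherwise `δ ⊥ α, β`, so `ε = α + β ± δ` has `⟪ε, α⟫ + ⟪ε, β⟫ = ‖α + β‖² > 0`, and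
subtracting `α` or `β` from `ε` gives a root `β ± δ` or `α ± δ`. Hence `r_m(α + β)` is at most
`r_m(α)` or `r_m(β)`, which together with the ultrametric inequality gives condition (2) for
`2 k₀ = r_m - r`. Rounding `k₀` up changes each term by at most `1/2`, and the resulting
half-integral loss on the left of (2) is absorbed because the right-hand side is an integer.
-/

variable {V : Type*} [NormedAddCommGroup V] [InnerProductSpace ℝ V] [DecidableEq V]

/-- A (crystallographic) root system, encoded as a finite subset of a real inner
product space: it does not contain `0`, is symmetric, is stable under the
reflections in its elements, and satisfies the integrality condition. -/
def IsCrystRootSet (R : Finset V) : Prop :=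
  (0 : V) ∉ R ∧ (∀ α ∈ R, -α ∈ R) ∧
  (∀ α ∈ R, ∀ β ∈ R, β - (2 * (inner ℝ β α : ℝ) / (inner ℝ α α : ℝ)) • α ∈ R) ∧
  (∀ α ∈ R, ∀ β ∈ R, ∃ z : ℤ, 2 * (inner ℝ β α : ℝ) = z * (inner ℝ α α : ℝ))

/-- Two roots are strongly orthogonal if neither their sum nor their difference
lies in `R ∪ {0}`. -/
def StronglyOrthogonal (R : Finset V) (α β : V) : Prop :=
  α + β ∉ R ∧ α - β ∉ R ∧ α + β ≠ 0 ∧ α - β ≠ 0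

instance (R : Finset V) (α β : V) : Decidable (StronglyOrthogonal R α β) :=
  inferInstanceAs (Decidable (α + β ∉ R ∧ α - β ∉ R ∧ α + β ≠ 0 ∧ α - β ≠ 0))

/-- `perp R S` is the set of roots strongly orthogonal to every root of `S`. -/
def perp (R : Finset V) (S : Finset V) : Finset V :=
  R.filter fun β => ∀ α ∈ S, StronglyOrthogonal R α β

/-- A function `r : R → ℤ` on a root system is non-archimedean if it is even and
satisfies the ultrametric inequality. -/
def NonArch (R : Finset V) (r : V → ℤ) : Prop :=
  (∀ α ∈ R, r (-α) = r α) ∧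
  ∀ α ∈ R, ∀ β ∈ R, α + β ∈ R → min (r α) (r β) ≤ r (α + β)

/-- `rm R r α` is the maximum of `r β` over the roots `β` not strongly
orthogonal to `α` (for `α ∈ R` this set contains `α` itself, so is nonempty). -/
def rm (R : Finset V) (r : V → ℤ) (α : V) : ℤ :=
  WithBot.unbotD (r α)
    (((R.filter fun β => ¬ StronglyOrthogonal R α β).image r).max)

/-- `k₁(α) = ⌈(r_m(α) − r(α))/2⌉` -/
def k1 (R : Finset V) (r : V → ℤ) (α : V) : ℤ :=
  ⌈((rm R r α - r α : ℤ) : ℚ) / 2⌉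


open scoped InnerProductSpace

namespace IsCrystRootSet

variable {E : Type*} [NormedAddCommGroup E] [InnerProductSpace ℝ E] {R : Finset E} {x y : E}

lemma neg_mem (hR : IsCrystRootSet R) (hx : x ∈ R) : -x ∈ R := hR.2.1 x hx

lemma neg_mem_iff (hR : IsCrystRootSet R) : -x ∈ R ↔ x ∈ R :=
  ⟨fun h => neg_neg x ▸ hR.neg_mem h, hR.neg_mem⟩

lemma ne_zero (hR : IsCrystRootSet R) (hx : x ∈ R) : x ≠ 0 := fun h => hR.1 (h ▸ hx)

lemma sub_mem_of_two_mul_inner_eq (hR : IsCrystRootSet R) (hx : x ∈ R) (hy : y ∈ R)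
    (h : 2 * ⟪x, y⟫_ℝ = ⟪y, y⟫_ℝ) : x - y ∈ R := by
  have hyy : ⟪y, y⟫_ℝ ≠ 0 := inner_self_ne_zero.2 (hR.ne_zero hy)
  have := hR.2.2.1 y hy x hx
  rwa [h, div_self hyy, one_smul] at this

/-- The Cartan integer `2⟪x, y⟫ / ⟪y, y⟫` is positive; it is either `1`, making `x - y` the
reflection of `x` in `y`, or at least `2`. -/
lemma sub_mem_or_inner_self_le (hR : IsCrystRootSet R) (hx : x ∈ R) (hy : y ∈ R)
    (h : 0 < ⟪x, y⟫_ℝ) : x - y ∈ R ∨ ⟪y, y⟫_ℝ ≤ ⟪x, y⟫_ℝ := by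
  obtain ⟨n, hn⟩ := hR.2.2.2 y hy x hx
  have hyy : 0 < ⟪y, y⟫_ℝ := real_inner_self_pos.2 (hR.ne_zero hy)
  have hn0 : 0 < n := by
    exact_mod_cast pos_of_mul_pos_left (hn ▸ by linarith : (0 : ℝ) < n * ⟪y, y⟫_ℝ) hyy.le
  obtain hn1 | hn2 : n = 1 ∨ 2 ≤ n := by omega
  · exact .inl (hR.sub_mem_of_two_mul_inner_eq hx hy (by simp [hn, hn1]))
  · have : (2 : ℝ) ≤ n := by exact_mod_cast hn2
    exact .inr (by nlinarith)

lemma sub_mem_or_eq_of_inner_pos (hR : IsCrystRootSet R) (hx : x ∈ R) (hy : y ∈ R)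
    (h : 0 < ⟪x, y⟫_ℝ) : x - y ∈ R ∨ x = y := by
  rcases hR.sub_mem_or_inner_self_le hx hy h with hxy | hyy
  · exact .inl hxy
  rcases hR.sub_mem_or_inner_self_le hy hx (real_inner_comm x y ▸ h) with hyx | hxx
  · exact .inl (neg_sub y x ▸ hR.neg_mem hyx)
  · refine .inr (sub_eq_zero.1 (real_inner_self_nonpos.1 ?_))
    rw [real_inner_comm x y] at hxx
    simp only [inner_sub_left, inner_sub_right, real_inner_comm x y]
    linarith

lemma inner_eq_zero_of_stronglyOrthogonal (hR : IsCrystRootSet R) (hx : x ∈ R) (hy : y ∈ R)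
    (h : StronglyOrthogonal R x y) : ⟪x, y⟫_ℝ = 0 := by
  rcases lt_trichotomy ⟪x, y⟫_ℝ 0 with hneg | hzero | hpos
  · have : 0 < ⟪x, -y⟫_ℝ := by rw [inner_neg_right]; linarith
    rcases hR.sub_mem_or_eq_of_inner_pos hx (hR.neg_mem hy) this with hxy | hxy
    · exact absurd (sub_neg_eq_add x y ▸ hxy) h.1
    · exact absurd (eq_neg_iff_add_eq_zero.1 hxy) h.2.2.1
  · exact hzero
  · rcases hR.sub_mem_or_eq_of_inner_pos hx hy hpos with hxy | hxy
    · exact absurd hxy h.2.1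
    · exact absurd (sub_eq_zero.2 hxy) h.2.2.2

end IsCrystRootSet

section StronglyOrthogonal

variable {E : Type*} [NormedAddCommGroup E] {R : Finset E} {α β δ : E}

lemma not_stronglyOrthogonal_self : ¬ StronglyOrthogonal R α α :=
  fun h => h.2.2.2 (sub_self α)

lemma stronglyOrthogonal_neg_right :
    StronglyOrthogonal R α (-δ) ↔ StronglyOrthogonal R α δ := by
  simp only [StronglyOrthogonal, sub_neg_eq_add, ← sub_eq_add_neg]
  tauto

lemma stronglyOrthogonal_neg_left [InnerProductSpace ℝ E] (hR : IsCrystRootSet R) :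
    StronglyOrthogonal R (-α) δ ↔ StronglyOrthogonal R α δ := by
  simp only [StronglyOrthogonal, show -α + δ = -(α - δ) by abel,
    show -α - δ = -(α + δ) by abel, hR.neg_mem_iff, neg_ne_zero]
  tauto

lemma IsCrystRootSet.add_add_notMem_of_inner_pos [InnerProductSpace ℝ E]
    (hR : IsCrystRootSet R) (hα : α ∈ R) (hβδ : StronglyOrthogonal R β δ)
    (h : 0 < ⟪α + β + δ, α⟫_ℝ) : α + β + δ ∉ R := fun hε => by
  rcases hR.sub_mem_or_eq_of_inner_pos hε hα h with hsub | heq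
  · exact hβδ.1 (by rwa [add_assoc, add_sub_cancel_left] at hsub)
  · exact hβδ.2.2.1 (by rwa [add_assoc, add_eq_left] at heq)

lemma IsCrystRootSet.add_add_notMem [InnerProductSpace ℝ E] (hR : IsCrystRootSet R)
    (hα : α ∈ R) (hβ : β ∈ R) (hαβ : α + β ∈ R) (hδ : δ ∈ R) (hαδ : StronglyOrthogonal R α δ)
    (hβδ : StronglyOrthogonal R β δ) : α + β + δ ∉ R ∧ α + β + δ ≠ 0 := by
  refine ⟨fun hε => ?_, fun h0 => hαδ.1 ?_⟩
  · have hsum : ⟪α + β + δ, α⟫_ℝ + ⟪α + β + δ, β⟫_ℝ = ⟪α + β, α + β⟫_ℝ := by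
      simp only [inner_add_left, inner_add_right, real_inner_comm α δ, real_inner_comm β δ,
        hR.inner_eq_zero_of_stronglyOrthogonal hα hδ hαδ,
        hR.inner_eq_zero_of_stronglyOrthogonal hβ hδ hβδ]
      ring
    have hpos : 0 < ⟪α + β, α + β⟫_ℝ := real_inner_self_pos.2 (hR.ne_zero hαβ)
    by_cases hα' : 0 < ⟪α + β + δ, α⟫_ℝ
    · exact hR.add_add_notMem_of_inner_pos hα hβδ hα' hε
    · have hβ' : 0 < ⟪α + β + δ, β⟫_ℝ := by linarith
      rw [add_comm α β] at hε hβ'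
      exact hR.add_add_notMem_of_inner_pos hβ hαδ hβ' hε
  · rw [eq_neg_of_add_eq_zero_left (by rw [← h0]; abel : α + δ + β = 0)]
    exact hR.neg_mem hβ

lemma IsCrystRootSet.stronglyOrthogonal_add [InnerProductSpace ℝ E] (hR : IsCrystRootSet R)
    (hα : α ∈ R) (hβ : β ∈ R) (hαβ : α + β ∈ R) (hδ : δ ∈ R) (hαδ : StronglyOrthogonal R α δ)
    (hβδ : StronglyOrthogonal R β δ) : StronglyOrthogonal R (α + β) δ := by
  obtain ⟨h₁, h₃⟩ := hR.add_add_notMem hα hβ hαβ hδ hαδ hβδ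
  obtain ⟨h₂, h₄⟩ := hR.add_add_notMem hα hβ hαβ (hR.neg_mem hδ)
    (stronglyOrthogonal_neg_right.2 hαδ) (stronglyOrthogonal_neg_right.2 hβδ)
  rw [← sub_eq_add_neg] at h₂ h₄
  exact ⟨h₁, h₂, h₃, h₄⟩

end StronglyOrthogonal

section Rm

variable {E : Type*} [NormedAddCommGroup E] [DecidableEq E] {R : Finset E} (r : E → ℤ) {α δ : E}

lemma rm_eq_max' (hne : (R.filter fun β => ¬ StronglyOrthogonal R α β).Nonempty) :
    rm R r α = ((R.filter fun β => ¬ StronglyOrthogonal R α β).image r).max' (hne.image r) := by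
  rw [rm, ← Finset.coe_max' (hne.image r)]
  rfl

lemma le_rm (hδ : δ ∈ R) (h : ¬ StronglyOrthogonal R α δ) : r δ ≤ rm R r α := by
  have hmem : δ ∈ R.filter fun β => ¬ StronglyOrthogonal R α β := Finset.mem_filter.2 ⟨hδ, h⟩
  rw [rm_eq_max' r ⟨δ, hmem⟩]
  exact Finset.le_max' _ _ (Finset.mem_image_of_mem r hmem)

lemma exists_rm_eq (hα : α ∈ R) :
    ∃ δ ∈ R, ¬ StronglyOrthogonal R α δ ∧ r δ = rm R r α := by
  have hne : (R.filter fun β => ¬ StronglyOrthogonal R α β).Nonempty :=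
    ⟨α, Finset.mem_filter.2 ⟨hα, not_stronglyOrthogonal_self⟩⟩
  obtain ⟨δ, hδ, hδr⟩ := Finset.mem_image.1 (Finset.max'_mem _ (hne.image r))
  obtain ⟨hδR, hαδ⟩ := Finset.mem_filter.1 hδ
  exact ⟨δ, hδR, hαδ, hδr.trans (rm_eq_max' r hne).symm⟩

lemma rm_neg [InnerProductSpace ℝ E] (hR : IsCrystRootSet R) (hα : α ∈ R) :
    rm R r (-α) = rm R r α := by
  have key : ∀ α ∈ R, rm R r (-α) ≤ rm R r α := fun α hα => by
    obtain ⟨δ, hδ, hαδ, hδr⟩ := exists_rm_eq r (hR.neg_mem hα)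
    exact hδr ▸ le_rm r hδ (by rwa [stronglyOrthogonal_neg_left hR] at hαδ)
  exact le_antisymm (key α hα) (by simpa using key (-α) (hR.neg_mem hα))

lemma rm_add_le_max [InnerProductSpace ℝ E] (hR : IsCrystRootSet R) {α β : E} (hα : α ∈ R)
    (hβ : β ∈ R) (hαβ : α + β ∈ R) : rm R r (α + β) ≤ max (rm R r α) (rm R r β) := by
  obtain ⟨δ, hδ, hαβδ, hδr⟩ := exists_rm_eq r hαβ
  rw [← hδr]
  by_cases hαδ : StronglyOrthogonal R α δ
  · exact le_max_of_le_right
      (le_rm r hδ fun hβδ => hαβδ (hR.stronglyOrthogonal_add hα hβ hαβ hδ hαδ hβδ))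
  · exact le_max_of_le_left (le_rm r hδ hαδ)

lemma k1_eq : k1 R r α = -(-(rm R r α - r α) / 2) := by
  simpa [k1] using Rat.ceil_intCast_div_natCast (rm R r α - r α) 2

end Rm

/-- Condition (2) for `2 k₀ = r_m - r`. -/
lemma NonArch.two_mul_sub_min_le {R : Finset V} {r : V → ℤ} (hna : NonArch R r)
    (hR : IsCrystRootSet R) {α β : V} (hα : α ∈ R) (hβ : β ∈ R) (hαβ : α + β ∈ R) :
    2 * (r (α + β) - min (r α) (r β)) ≤
      (rm R r α - r α) + (rm R r β - r β) - (rm R r (α + β) - r (α + β)) := by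
  have : r α ≤ rm R r α := le_rm r hα not_stronglyOrthogonal_self
  have : r β ≤ rm R r α := le_rm r hβ fun h => h.1 hαβ
  have : r (α + β) ≤ rm R r α := le_rm r hαβ fun h => h.2.1 (by simpa using hR.neg_mem hβ)
  have : r β ≤ rm R r β := le_rm r hβ not_stronglyOrthogonal_self
  have : r α ≤ rm R r β := le_rm r hα fun h => h.1 (add_comm α β ▸ hαβ)
  have : r (α + β) ≤ rm R r β := le_rm r hαβ fun h => h.2.1 (by simpa using hR.neg_mem hα)
  have hultra : ∀ {a b}, a ∈ R → b ∈ R → a + b ∈ R → min (r (a + b)) (r b) ≤ r a :=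
    fun {a b} ha hb hab => by
      simpa [hna.1 b hb] using hna.2 (a + b) hab (-b) (hR.neg_mem hb) (by simpa using ha)
  have hα' := hultra hα hβ hαβ
  have hβ' := hultra hβ hα (add_comm α β ▸ hαβ)
  rw [add_comm β α] at hβ'
  have := rm_add_le_max r hR hα hβ hαβ
  omega

/-- The integer-valued ceiling `k₁` of `k₀` still satisfies the two conditions
characterizing root valuation lattices. -/
theorem k1_conditions (R : Finset V) (hR : IsCrystRootSet R) (r : V → ℤ)
    (hna : NonArch R r) :
    (∀ α ∈ R, rm R r α - r α ≤ k1 R r α + k1 R r (-α)) ∧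
    (∀ α ∈ R, ∀ β ∈ R, α + β ∈ R →
      r (α + β) - min (r α) (r β) ≤ k1 R r α + k1 R r β - k1 R r (α + β)) := by
  refine ⟨fun α hα => ?_, fun α hα β hβ hαβ => ?_⟩
  · rw [k1_eq, k1_eq, rm_neg r hR hα, hna.1 α hα]
    omega
  · have := hna.two_mul_sub_min_le hR hα hβ hαβ
    simp only [k1_eq]
    omega
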